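/- (Proposition, part (b)) Let p be a prime. The family {C_P : P ∈ 𝒫 ∖ S} is an edge clique cover of G: for every pair of distinct adjacent vertices v, v' of G, there exists a point P ∈ 𝒫 ∖ S such that v ∈ C_P and v' ∈ C_P (where C_P = {v ∈ Sym2 X : P ∈ L_v}). -/

import Mathlib

/-- Points of the concretely-defined finite projective plane of order `p`:
one point `alpha`, the points `beta y`, and the points `gamma x y`. -/
inductive ProjPoint (p : ℕ) : Type where
  | alpha : ProjPoint p
  | beta (y : ZMod p) : ProjPoint p
  | gamma (x y : ZMod p) : ProjPoint p

namespace ProjPoint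

/-- The line `L_α = {P_α} ∪ {P_β(y) : y}`. -/
def Lalpha (p : ℕ) : Set (ProjPoint p) :=
  {P | P = alpha ∨ ∃ y : ZMod p, P = beta y}

/-- The line `L_β(i) = {P_α} ∪ {P_γ(i,y) : y}`. -/
def Lbeta (p : ℕ) (i : ZMod p) : Set (ProjPoint p) :=
  {P | P = alpha ∨ ∃ y : ZMod p, P = gamma i y}

/-- The line `L_γ(i,j) = {P_β(i)} ∪ {P_γ(k, i·k + j) : k}`. -/
def Lgamma (p : ℕ) (i j : ZMod p) : Set (ProjPoint p) :=
  {P | P = beta i ∨ ∃ k : ZMod p, P = gamma k (i * k + j)}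

/-- The set of lines `ℒ`. -/
def Lines (p : ℕ) : Set (Set (ProjPoint p)) :=
  {Lalpha p} ∪ {L | ∃ i : ZMod p, L = Lbeta p i} ∪
    {L | ∃ i j : ZMod p, L = Lgamma p i j}

/-- The set `S = {P_α} ∪ {P_γ(k, k²) : k}`. -/
def S (p : ℕ) : Set (ProjPoint p) :=
  {P | P = alpha ∨ ∃ k : ZMod p, P = gamma k (k ^ 2)}

end ProjPoint

namespace ProjPoint

/-- Indexing of `S` by `X = Option (ZMod p)`: `Spt none = P_α` and
`Spt (some k) = P_γ(k, k²)`. -/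
def Spt (p : ℕ) : Option (ZMod p) → ProjPoint p
  | none => alpha
  | some k => gamma k (k ^ 2)

/-- The graph `G` on unordered pairs (diagonal allowed) from `X = Option (ZMod p)`,
where two distinct vertices are adjacent iff no element of `X` belongs to both. -/
def G (p : ℕ) : SimpleGraph (Sym2 (Option (ZMod p))) where
  Adj v w := v ≠ w ∧ ∀ x : Option (ZMod p), ¬(x ∈ v ∧ x ∈ w)
  symm := ⟨fun v w h => ⟨h.1.symm, fun x hx => h.2 x ⟨hx.2, hx.1⟩⟩⟩
  loopless := ⟨fun v h => h.1 rfl⟩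

end ProjPoint

/-!
Any two lines of the plane meet, and a line meets the conic `S` in at most two points
(for `L_γ(i,j)` these are the roots of `k² = i·k + j`). Hence `L_v ∩ S` consists exactly of
the points `S(l)` with `l ∈ v`, so if `L_v` and `L_{v'}` met in a point of `S`, its index
would lie in both `v` and `v'`, contradicting adjacency.
-/

namespace ProjPoint

variable {p : ℕ}

lemma Spt_injective : Function.Injective (Spt p) := by
  rintro (_ | a) (_ | b) h <;> simp_all [Spt]

lemma S_eq_range_Spt : S p = Set.range (Spt p) := by
  ext t
  constructor
  · rintro (rfl | ⟨k, rfl⟩)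
    exacts [⟨none, rfl⟩, ⟨some k, rfl⟩]
  · rintro ⟨_ | k, rfl⟩
    exacts [Or.inl rfl, Or.inr ⟨k, rfl⟩]

lemma Spt_mem_Lgamma_iff {x : Option (ZMod p)} {i j : ZMod p} :
    Spt p x ∈ Lgamma p i j ↔ ∃ k, x = some k ∧ k ^ 2 = i * k + j := by
  cases x <;> simp [Spt, Lgamma, eq_comm]

section Field

variable [Fact p.Prime]

lemma Lgamma_inter_Lgamma_nonempty (i j i' j' : ZMod p) :
    (Lgamma p i j ∩ Lgamma p i' j').Nonempty := by
  by_cases hi : i = i'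
  · exact ⟨beta i, Or.inl rfl, Or.inl (by rw [hi])⟩
  set x := (j' - j) / (i - i')
  have hx : i * x + j = i' * x + j' := by
    have : i - i' ≠ 0 := sub_ne_zero.mpr hi
    simp only [x]
    field_simp
    ring
  exact ⟨gamma x (i * x + j), Or.inr ⟨x, rfl⟩, Or.inr ⟨x, by rw [hx]⟩⟩

lemma inter_nonempty_of_mem_Lines {L L' : Set (ProjPoint p)} (hL : L ∈ Lines p)
    (hL' : L' ∈ Lines p) : (L ∩ L').Nonempty := by
  rcases hL with (rfl | ⟨i, rfl⟩) | ⟨i, j, rfl⟩ <;>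
    rcases hL' with (rfl | ⟨i', rfl⟩) | ⟨i', j', rfl⟩
  · exact ⟨alpha, Or.inl rfl, Or.inl rfl⟩
  · exact ⟨alpha, Or.inl rfl, Or.inl rfl⟩
  · exact ⟨beta i', Or.inr ⟨i', rfl⟩, Or.inl rfl⟩
  · exact ⟨alpha, Or.inl rfl, Or.inl rfl⟩
  · exact ⟨alpha, Or.inl rfl, Or.inl rfl⟩
  · exact ⟨gamma i (i' * i + j'), Or.inr ⟨_, rfl⟩, Or.inr ⟨i, rfl⟩⟩
  · exact ⟨beta i, Or.inl rfl, Or.inr ⟨i, rfl⟩⟩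
  · exact ⟨gamma i' (i * i' + j), Or.inr ⟨i', rfl⟩, Or.inr ⟨_, rfl⟩⟩
  · exact Lgamma_inter_Lgamma_nonempty i j i' j'

lemma exists_preimage_Spt_subset_pair {L : Set (ProjPoint p)} (hL : L ∈ Lines p) :
    ∃ a b, Spt p ⁻¹' L ⊆ {a, b} := by
  rcases hL with (rfl | ⟨i, rfl⟩) | ⟨i, j, rfl⟩
  · refine ⟨none, none, ?_⟩
    rintro (_ | k) hk <;> simp_all [Spt, Lalpha]
  · refine ⟨none, some i, ?_⟩
    rintro (_ | k) hk <;> simp_all [Spt, Lbeta]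
  · by_cases hroot : ∃ k : ZMod p, k ^ 2 = i * k + j
    · obtain ⟨k, hk⟩ := hroot
      refine ⟨some k, some (i - k), fun x hx => ?_⟩
      obtain ⟨m, rfl, hm⟩ := Spt_mem_Lgamma_iff.mp hx
      have : (m - k) * (m - (i - k)) = 0 := by linear_combination hm - hk
      simpa [sub_eq_zero] using this
    · refine ⟨none, none, fun x hx => ?_⟩
      obtain ⟨m, rfl, hm⟩ := Spt_mem_Lgamma_iff.mp hx
      exact absurd ⟨m, hm⟩ hroot

lemma mem_of_Spt_mem (Lv : Sym2 (Option (ZMod p)) → Set (ProjPoint p))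
    (hLine : ∀ v, Lv v ∈ Lines p)
    (hoff : ∀ l l' : Option (ZMod p), l ≠ l' → Spt p l ∈ Lv s(l, l') ∧ Spt p l' ∈ Lv s(l, l'))
    (hdiag : ∀ l : Option (ZMod p), ∀ t ∈ S p, t ∈ Lv s(l, l) → t = Spt p l)
    {x : Option (ZMod p)} {v : Sym2 (Option (ZMod p))} (hx : Spt p x ∈ Lv v) : x ∈ v := by
  induction v using Sym2.ind with
  | _ l l' =>
  by_cases hll' : l = l'
  · subst hll'
    rw [Spt_injective (hdiag l _ (S_eq_range_Spt ▸ ⟨x, rfl⟩) hx)]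
    exact Sym2.mem_mk_left l l
  obtain ⟨a, b, hab⟩ := exists_preimage_Spt_subset_pair (hLine s(l, l'))
  have hl := hab (hoff l l' hll').1
  have hl' := hab (hoff l l' hll').2
  have hx' := hab hx
  simp only [Set.mem_insert_iff, Set.mem_singleton_iff] at hl hl' hx'
  rw [Sym2.mem_iff]
  grind

end Field

end ProjPoint

/-- (Proposition, part (b)) The family `{C_P : P ∈ 𝒫 ∖ S}` is an edge clique cover
of `G`: for every pair of adjacent vertices `v, v'` of `G`, there is a point
`P ∉ S` with `P ∈ L_v` and `P ∈ L_{v'}`. -/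
theorem edge_clique_cover_of_points_not_in_S (p : ℕ) [Fact p.Prime]
    (Lv : Sym2 (Option (ZMod p)) → Set (ProjPoint p))
    (hLine : ∀ v, Lv v ∈ ProjPoint.Lines p)
    (hoff : ∀ l l' : Option (ZMod p), l ≠ l' →
      ProjPoint.Spt p l ∈ Lv s(l, l') ∧ ProjPoint.Spt p l' ∈ Lv s(l, l'))
    (hdiag : ∀ l : Option (ZMod p), ProjPoint.Spt p l ∈ Lv s(l, l) ∧
      ∀ t ∈ ProjPoint.S p, t ∈ Lv s(l, l) → t = ProjPoint.Spt p l) :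
    ∀ v v' : Sym2 (Option (ZMod p)), (ProjPoint.G p).Adj v v' →
      ∃ P : ProjPoint p, P ∉ ProjPoint.S p ∧ P ∈ Lv v ∧ P ∈ Lv v' := by
  intro v v' hadj
  have hdiag' l := (hdiag l).2
  obtain ⟨P, hPv, hPv'⟩ := ProjPoint.inter_nonempty_of_mem_Lines (hLine v) (hLine v')
  refine ⟨P, fun hPS => ?_, hPv, hPv'⟩
  obtain ⟨x, rfl⟩ := ProjPoint.S_eq_range_Spt ▸ hPS
  exact hadj.2 x ⟨ProjPoint.mem_of_Spt_mem Lv hLine hoff hdiag' hPv,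
    ProjPoint.mem_of_Spt_mem Lv hLine hoff hdiag' hPv'⟩
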